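/- arXiv:2506.07410 — 2 statements merged into one kernel-verified Lean document; each statement's English description precedes it below -/
import Mathlib

section
/- Let 𝔤 be a finite-dimensional real Lie algebra whose Killing form κ is negative definite (κ(x,x) < 0 for all x ≠ 0). Then the degenerate kernel space K(λ) equals all of 𝔤 if and only if λ = 0. Equivalently: T_0 is the zero operator, and for every nonzero λ ∈ 𝔤* there exists v ∈ 𝔤 with T_λ(v) ≠ 0. -/
/-- The Spencer prolongation map: `T_λ(v)(w₁)(w₂) = ½(λ⁅w₁,⁅w₂,v⁆⁆ + λ⁅w₂,⁅w₁,v⁆⁆)`. -/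
noncomputable def spencerT {L : Type} [LieRing L] [LieAlgebra ℝ L]
    (lam : Module.Dual ℝ L) (v w₁ w₂ : L) : ℝ :=
  (1 / 2) * (lam ⁅w₁, ⁅w₂, v⁆⁆ + lam ⁅w₂, ⁅w₁, v⁆⁆)

/-- The degenerate kernel space `K(λ) = ker T_λ`, as a subspace of `𝔤`. -/
noncomputable def spencerK (L : Type) [LieRing L] [LieAlgebra ℝ L]
    (lam : Module.Dual ℝ L) : Submodule ℝ L where
  carrier := {v | ∀ w₁ w₂ : L, spencerT lam v w₁ w₂ = 0}
  zero_mem' := by intro w₁ w₂; simp [spencerT]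
  add_mem' := by
    intro a b ha hb w₁ w₂
    have h1 := ha w₁ w₂
    have h2 := hb w₁ w₂
    simp only [spencerT, lie_add, map_add] at h1 h2 ⊢
    linarith
  smul_mem' := by
    intro c v hv w₁ w₂
    have h := hv w₁ w₂
    simp only [spencerT, lie_smul, map_smul, smul_eq_mul] at h ⊢
    linear_combination c * h

/-! If `λ = κ(h, ·)`, invariance of `κ` gives `T_λ(v)(h)(v) = ½ κ(⁅h, v⁆, ⁅h, v⁆)`. So when `T_λ`
vanishes and `κ` is anisotropic, `h` is central; then `ad h = 0`, hence `κ(h, h) = 0` and `h = 0`.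
Nondegeneracy of `κ` ensures every `λ` has this form. -/

section Killing

variable {R L : Type*} [CommRing R] [LieRing L] [LieAlgebra R L]

lemma killingForm_apply_lie_lie_self (h v : L) :
    killingForm R L h ⁅v, ⁅h, v⁆⁆ = killingForm R L ⁅h, v⁆ ⁅h, v⁆ :=
  (LieModule.traceForm_apply_lie_apply R L L h v ⁅h, v⁆).symm

lemma killingForm_self_eq_zero_of_forall_lie_eq_zero {h : L} (hh : ∀ v : L, ⁅h, v⁆ = 0) :
    killingForm R L h h = 0 := by
  have had : LieAlgebra.ad R L h = 0 := LinearMap.ext hh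
  simp [killingForm_apply_apply, had]

lemma killingForm_nondegenerate_of_anisotropic
    (haniso : ∀ x : L, killingForm R L x x = 0 → x = 0) :
    (killingForm R L).Nondegenerate :=
  (LieModule.traceForm_isSymm R L L).isRefl.nondegenerate_iff_separatingLeft.mpr
    (LinearMap.BilinForm.separatingLeft_of_anisotropic haniso)

end Killing

section Spencer

variable {L : Type} [LieRing L] [LieAlgebra ℝ L]

@[simp]
lemma spencerT_zero (v w₁ w₂ : L) : spencerT (0 : Module.Dual ℝ L) v w₁ w₂ = 0 := by
  simp [spencerT]

lemma spencerT_apply_self (lam : Module.Dual ℝ L) (v w : L) :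
    spencerT lam v w v = (1 / 2) * lam ⁅v, ⁅w, v⁆⁆ := by
  simp [spencerT]

lemma spencerK_eq_top_iff (lam : Module.Dual ℝ L) :
    spencerK L lam = ⊤ ↔ ∀ v w₁ w₂ : L, spencerT lam v w₁ w₂ = 0 :=
  Submodule.eq_top_iff'

lemma spencerT_killingForm_apply_self (h v : L) :
    spencerT (killingForm ℝ L h) v h v = (1 / 2) * killingForm ℝ L ⁅h, v⁆ ⁅h, v⁆ := by
  rw [spencerT_apply_self, killingForm_apply_lie_lie_self]

variable [Module.Finite ℝ L]

lemma eq_zero_of_forall_spencerT_eq_zero (haniso : ∀ x : L, killingForm ℝ L x x = 0 → x = 0)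
    {lam : Module.Dual ℝ L} (hT : ∀ v w₁ w₂ : L, spencerT lam v w₁ w₂ = 0) : lam = 0 := by
  obtain ⟨h, rfl⟩ : ∃ h : L, killingForm ℝ L h = lam :=
    ((killingForm ℝ L).toDual (killingForm_nondegenerate_of_anisotropic haniso)).surjective lam
  have hcentral : ∀ v : L, ⁅h, v⁆ = 0 := fun v ↦ haniso _ <| by
    simpa [spencerT_killingForm_apply_self] using hT v h v
  rw [haniso h (killingForm_self_eq_zero_of_forall_lie_eq_zero hcentral), map_zero]

lemma spencerK_eq_top_iff_eq_zero (haniso : ∀ x : L, killingForm ℝ L x x = 0 → x = 0)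
    (lam : Module.Dual ℝ L) : spencerK L lam = ⊤ ↔ lam = 0 := by
  rw [spencerK_eq_top_iff]
  refine ⟨eq_zero_of_forall_spencerT_eq_zero haniso, ?_⟩
  rintro rfl
  simp

end Spencer

/-- For a finite-dimensional real Lie algebra with negative definite Killing form,
the degenerate kernel space `K(λ)` is all of `𝔤` iff `λ = 0`; equivalently, `T_0 = 0`
and for every nonzero `λ` there is `v` with `T_λ(v) ≠ 0`. -/
theorem spencerK_eq_top_iff_lambda_eq_zero
    {L : Type} [LieRing L] [LieAlgebra ℝ L] [Module.Finite ℝ L]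
    (hneg : ∀ x : L, x ≠ 0 → killingForm ℝ L x x < 0) :
    (∀ lam : Module.Dual ℝ L, spencerK L lam = ⊤ ↔ lam = 0) ∧
    (∀ v w₁ w₂ : L, spencerT (0 : Module.Dual ℝ L) v w₁ w₂ = 0) ∧
    (∀ lam : Module.Dual ℝ L, lam ≠ 0 →
      ∃ v w₁ w₂ : L, spencerT lam v w₁ w₂ ≠ 0) := by
  have haniso : ∀ x : L, killingForm ℝ L x x = 0 → x = 0 := fun x hx ↦
    by_contra fun hx0 ↦ (hneg x hx0).ne hx
  refine ⟨spencerK_eq_top_iff_eq_zero haniso, spencerT_zero, fun lam hlam ↦ ?_⟩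
  by_contra! hT
  exact hlam (eq_zero_of_forall_spencerT_eq_zero haniso hT)
end

section
/- Let 𝕜 be a field, V, V', W, W' finite-dimensional vector spaces over 𝕜, and d : V → V', δ : W → W' linear maps. Then the dimension of the degenerate cocycle space factors: dim(ker(d ⊗ 1_W) ⊓ ker(1_V ⊗ δ)) = dim(ker d) · dim(ker δ). -/
set_option maxHeartbeats 1000000

open TensorProduct Module

/-- Dimension of the degenerate cocycle space:
`dim(ker(d ⊗ 1_W) ⊓ ker(1_V ⊗ δ)) = dim(ker d) · dim(ker δ)`. -/
theorem finrank_ker_inf_ker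
    {𝕜 : Type} [Field 𝕜]
    {V V' W W' : Type} [AddCommGroup V] [Module 𝕜 V]
    [AddCommGroup V'] [Module 𝕜 V'] [AddCommGroup W] [Module 𝕜 W]
    [AddCommGroup W'] [Module 𝕜 W']
    [FiniteDimensional 𝕜 V] [FiniteDimensional 𝕜 V']
    [FiniteDimensional 𝕜 W] [FiniteDimensional 𝕜 W']
    (d : V →ₗ[𝕜] V') (δ : W →ₗ[𝕜] W') :
    finrank 𝕜
        ↥(LinearMap.ker (LinearMap.rTensor W d) ⊓ LinearMap.ker (LinearMap.lTensor V δ))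
      = finrank 𝕜 (LinearMap.ker d) * finrank 𝕜 (LinearMap.ker δ) := by
  set K := LinearMap.ker d
  set L := LinearMap.ker δ
  -- exactness of 0 → K → V → range d → 0 and similarly for δ
  have hexd : Function.Exact K.subtype d.rangeRestrict := by
    rw [LinearMap.exact_iff]
    simp [K, Submodule.range_subtype]
  have hexδ : Function.Exact L.subtype δ.rangeRestrict := by
    rw [LinearMap.exact_iff]
    simp [L, Submodule.range_subtype]
  -- kernels of the tensored maps
  have h1 : LinearMap.ker (LinearMap.rTensor W d)
      = LinearMap.range (LinearMap.rTensor W K.subtype) := by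
    have : LinearMap.ker (LinearMap.rTensor W d.rangeRestrict)
        = LinearMap.range (LinearMap.rTensor W K.subtype) :=
      (Module.Flat.rTensor_exact W hexd).linearMap_ker_eq
    rw [← this]
    have : d = (LinearMap.range d).subtype ∘ₗ d.rangeRestrict := rfl
    conv_lhs => rw [this]
    rw [LinearMap.rTensor_comp, LinearMap.ker_comp,
      LinearMap.ker_eq_bot.mpr
        (Module.Flat.rTensor_preserves_injective_linearMap _ (Submodule.injective_subtype _)),
      Submodule.comap_bot]
  have h2 : LinearMap.ker (LinearMap.lTensor V δ)
      = LinearMap.range (LinearMap.lTensor V L.subtype) := by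
    have : LinearMap.ker (LinearMap.lTensor V δ.rangeRestrict)
        = LinearMap.range (LinearMap.lTensor V L.subtype) :=
      (Module.Flat.lTensor_exact V hexδ).linearMap_ker_eq
    rw [← this]
    have : δ = (LinearMap.range δ).subtype ∘ₗ δ.rangeRestrict := rfl
    conv_lhs => rw [this]
    rw [LinearMap.lTensor_comp, LinearMap.ker_comp,
      LinearMap.ker_eq_bot.mpr
        (Module.Flat.lTensor_preserves_injective_linearMap _ (Submodule.injective_subtype _)),
      Submodule.comap_bot]
  -- the sup is the kernel of map of range restrictions
  have h3 : LinearMap.ker (TensorProduct.map d.rangeRestrict δ.rangeRestrict)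
      = LinearMap.range (LinearMap.lTensor V L.subtype)
        ⊔ LinearMap.range (LinearMap.rTensor W K.subtype) :=
    TensorProduct.map_ker hexd d.surjective_rangeRestrict hexδ δ.surjective_rangeRestrict
  have hA : finrank 𝕜 ↥(LinearMap.range (LinearMap.rTensor W K.subtype))
      = finrank 𝕜 K * finrank 𝕜 W := by
    rw [LinearMap.finrank_range_of_inj
      (Module.Flat.rTensor_preserves_injective_linearMap _ (Submodule.injective_subtype _))]
    exact finrank_tensorProduct
  have hB : finrank 𝕜 ↥(LinearMap.range (LinearMap.lTensor V L.subtype))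
      = finrank 𝕜 V * finrank 𝕜 L := by
    rw [LinearMap.finrank_range_of_inj
      (Module.Flat.lTensor_preserves_injective_linearMap _ (Submodule.injective_subtype _))]
    exact finrank_tensorProduct
  have hrange : LinearMap.range (TensorProduct.map d.rangeRestrict δ.rangeRestrict) = ⊤ :=
    LinearMap.range_eq_top.mpr
      (TensorProduct.map_surjective d.surjective_rangeRestrict δ.surjective_rangeRestrict)
  have hsup : finrank 𝕜
        ↥(LinearMap.range (LinearMap.lTensor V L.subtype)
          ⊔ LinearMap.range (LinearMap.rTensor W K.subtype))
        + finrank 𝕜 (LinearMap.range d) * finrank 𝕜 (LinearMap.range δ)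
        = finrank 𝕜 V * finrank 𝕜 W := by
    have h5 := LinearMap.finrank_range_add_finrank_ker
      (TensorProduct.map d.rangeRestrict δ.rangeRestrict)
    rw [hrange, h3, finrank_top] at h5
    rw [finrank_tensorProduct] at h5
    have hvw : finrank 𝕜 (V ⊗[𝕜] W) = finrank 𝕜 V * finrank 𝕜 W := finrank_tensorProduct
    rw [hvw] at h5
    linarith [h5]
  have e1 := Submodule.finrank_sup_add_finrank_inf_eq
    (LinearMap.range (LinearMap.rTensor W K.subtype))
    (LinearMap.range (LinearMap.lTensor V L.subtype))
  rw [sup_comm, hA, hB] at e1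
  have e5 := LinearMap.finrank_range_add_finrank_ker d
  have e6 := LinearMap.finrank_range_add_finrank_ker δ
  rw [h1, h2]
  show finrank 𝕜 ↥(LinearMap.range (LinearMap.rTensor W K.subtype)
    ⊓ LinearMap.range (LinearMap.lTensor V L.subtype)) = finrank 𝕜 K * finrank 𝕜 L
  rw [← e5, ← e6] at e1 hsup
  show _ = finrank 𝕜 (LinearMap.ker d) * finrank 𝕜 (LinearMap.ker δ)
  ring_nf at e1 hsup ⊢
  linarith [e1, hsup]
end
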